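/- arXiv:2408.09313 — 4 statements merged into one kernel-verified Lean document; each statement's English description precedes it below -/
import Mathlib

section
/- Let c be a weak composition. Then the sum of x^T over all weak composition tableaux T of shape c equals the sum of the monomials x^d over all weak compositions d such that d dominates c and flatt(d) refines flatt(c). -/
/-!
STATEMENT 4: Let c be a weak composition. Then the sum of x^T over all weak composition
tableaux T of shape c equals the sum of the monomials x^d over all weak compositions d such
that d dominates c and flatt(d) refines flatt(c).

Conventions: positions are 0-indexed; the variable indexed by `i : ℕ` is `x_{i+1}`, and a
tableau entry `e ∈ {1,…,L}` (where `L = c.length` bounds all entries of a weak composition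
tableau of shape `c`) is represented by `e - 1 : Fin L`.  Weak compositions `d` appearing on
the right-hand side necessarily have support in the first `L` positions and entries at most
`|c|`; they are represented (up to trailing zeros) by functions `Fin L → Fin (c.sum + 1)`.
-/

open scoped Classical
open MvPolynomial

/-- The flattening of a weak composition: delete all zero entries. -/
def flatt (l : List ℕ) : List ℕ := l.filter (· ≠ 0)

/-- `Refines lam mu` : the composition `lam` refines the composition `mu`. -/
def Refines (lam mu : List ℕ) : Prop :=
  ∃ L : List (List ℕ), (∀ b ∈ L, b ≠ []) ∧ L.flatten = lam ∧ L.map List.sum = mu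

/-- `Dominates lam mu` : `lam_1 + ⋯ + lam_i ≥ mu_1 + ⋯ + mu_i` for all `i`. -/
def Dominates (lam mu : List ℕ) : Prop :=
  ∀ i : ℕ, (mu.take i).sum ≤ (lam.take i).sum

/-- The boxes of the Young diagram of a (weak) composition `lam`. -/
def boxes (lam : List ℕ) : Finset (ℕ × ℕ) :=
  (Finset.range lam.length ×ˢ Finset.range (lam.foldr max 0)).filter
    (fun p => p.2 < lam.getD p.1 0)

/-- Lexicographic order on boxes. -/
def boxLe (p q : ℕ × ℕ) : Prop := p.1 < q.1 ∨ (p.1 = q.1 ∧ p.2 ≤ q.2)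

/-- A weak composition tableau of shape `lam`, as a function from boxes to `Fin lam.length`
(`v : Fin lam.length` represents the entry `v + 1 ∈ {1,…,lam.length}`): order-preserving,
rows strictly increasing from row to row, and every entry of (0-indexed) row `i` at most
`i + 1`. -/
def IsWCTFn (lam : List ℕ) (T : {p // p ∈ boxes lam} → Fin lam.length) : Prop :=
  (∀ p q : {p // p ∈ boxes lam}, boxLe p.1 q.1 → T p ≤ T q) ∧
  (∀ p q : {p // p ∈ boxes lam}, p.1.1 < q.1.1 → T p < T q) ∧
  (∀ p : {p // p ∈ boxes lam}, (T p : ℕ) ≤ p.1.1)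


/-!
Read the boxes of the diagram of `c` in lexicographic order. An order-preserving filling is then
a weakly increasing word, so it is determined by its content `d`: the box in position `n` carries
the index of the block of `d` containing `n`. For this word the entries of row `i` are at most
`i + 1` exactly when `d` dominates `c`, and entries in different rows are distinct exactly when
every partial sum of `c` is a partial sum of `d`; as both have total `|c|`, the latter says that
`flatt d` refines `flatt c`. Hence `T ↦ content T` is a bijection between the two index sets, and
it carries `x^T` to `x^d`.
-/

open Finset

lemma List.sum_take_succ_getD (l : List ℕ) (i : ℕ) :
    (l.take (i + 1)).sum = (l.take i).sum + l.getD i 0 := by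
  rw [List.take_add_one, List.sum_append, List.getD_eq_getElem?_getD]
  cases l[i]? <;> simp

lemma List.sum_take_le_sum_take (l : List ℕ) {m n : ℕ} (h : m ≤ n) :
    (l.take m).sum ≤ (l.take n).sum :=
  List.monotone_sum_take l h

lemma List.sum_take_le_sum (l : List ℕ) (n : ℕ) : (l.take n).sum ≤ l.sum :=
  (List.take_sublist n l).sum_le_sum fun _ _ => Nat.zero_le _

lemma List.getD_le_foldr_max (l : List ℕ) (i : ℕ) : l.getD i 0 ≤ l.foldr max 0 := by
  induction l generalizing i with
  | nil => simp
  | cons a t ih =>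
    cases i with
    | zero => exact le_max_left _ _
    | succ i => exact (ih i).trans (le_max_right _ _)

lemma range_sum_take_cons (x : ℕ) (t : List ℕ) :
    Set.range (fun j => ((x :: t).take j).sum) =
      insert 0 ((x + ·) '' Set.range fun j => (t.take j).sum) := by
  ext n
  simp only [Set.mem_range, Set.mem_insert_iff, Set.mem_image]
  constructor
  · rintro ⟨_ | j, rfl⟩
    · simp
    · exact Or.inr ⟨_, ⟨j, rfl⟩, by simp⟩
  · rintro (rfl | ⟨_, ⟨j, rfl⟩, rfl⟩)
    · exact ⟨0, rfl⟩
    · exact ⟨j + 1, by simp⟩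

lemma range_sum_take_flatt (l : List ℕ) :
    Set.range (fun j => ((flatt l).take j).sum) = Set.range fun j => (l.take j).sum := by
  induction l with
  | nil => rfl
  | cons x t ih =>
    rw [range_sum_take_cons]
    by_cases hx : x = 0
    · rw [show flatt (x :: t) = flatt t by simp [flatt, hx], ih, hx]
      simp only [zero_add, Set.image_id']
      exact (Set.insert_eq_of_mem (Set.mem_range_self 0)).symm
    · rw [show flatt (x :: t) = x :: flatt t by simp [flatt, hx], range_sum_take_cons, ih]

lemma sum_flatt (l : List ℕ) : (flatt l).sum = l.sum := by
  induction l with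
  | nil => rfl
  | cons x t ih => by_cases hx : x = 0 <;> simp [flatt, hx, ← ih]

lemma ne_zero_of_mem_flatt {l : List ℕ} {x : ℕ} (h : x ∈ flatt l) : x ≠ 0 := by
  simpa [flatt] using (List.mem_filter.1 h).2

lemma Refines.sum_eq {a b : List ℕ} (h : Refines a b) : a.sum = b.sum := by
  obtain ⟨L, -, rfl, rfl⟩ := h
  exact List.sum_flatten

lemma Refines.range_sum_take_subset {a b : List ℕ} (h : Refines a b) :
    (Set.range fun r => (b.take r).sum) ⊆ Set.range fun j => (a.take j).sum := by
  obtain ⟨L, -, rfl, rfl⟩ := h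
  rintro _ ⟨r, rfl⟩
  refine ⟨(L.take r).flatten.length, ?_⟩
  have hsplit : L.flatten = (L.take r).flatten ++ (L.drop r).flatten := by
    rw [← List.flatten_append, List.take_append_drop]
  simp only [hsplit, List.take_left, List.sum_flatten, List.map_take]

lemma refines_of_range_sum_take_subset {a b : List ℕ} (ha : ∀ x ∈ a, x ≠ 0)
    (hb : ∀ x ∈ b, x ≠ 0) (hsum : a.sum = b.sum)
    (hsub : (Set.range fun r => (b.take r).sum) ⊆ Set.range fun j => (a.take j).sum) :
    Refines a b := by
  induction b generalizing a with
  | nil =>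
    have : a = [] := List.eq_nil_iff_forall_not_mem.2 fun x hx =>
      ha x hx (List.sum_eq_zero_iff.1 hsum x hx)
    exact ⟨[], by simp, this.symm, rfl⟩
  | cons x b ih =>
    obtain ⟨j, hj⟩ := hsub ⟨1, rfl⟩
    simp only [List.take_succ_cons, List.take_zero, List.sum_cons, List.sum_nil,
      add_zero] at hj
    have hsub' : (Set.range fun r => (b.take r).sum) ⊆
        Set.range fun k => ((a.drop j).take k).sum := by
      rintro _ ⟨r, rfl⟩
      obtain ⟨k, hk⟩ := hsub ⟨r + 1, rfl⟩
      simp only [List.take_succ_cons, List.sum_cons] at hk ⊢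
      rcases lt_or_ge k j with hkj | hjk
      · have := a.sum_take_le_sum_take hkj.le
        exact ⟨0, by simp only [List.take_zero, List.sum_nil]; omega⟩
      · obtain ⟨m, rfl⟩ := Nat.exists_eq_add_of_le hjk
        refine ⟨m, show ((a.drop j).take m).sum = (b.take r).sum from ?_⟩
        rw [List.take_add, List.sum_append, hj] at hk
        omega
    obtain ⟨L, hne, hflat, hsums⟩ := ih (fun y hy => ha y (List.mem_of_mem_drop hy))
      (fun y hy => hb y (List.mem_cons_of_mem x hy))
      (by have := List.sum_take_add_sum_drop a j; simp only [List.sum_cons] at hsum; omega) hsub'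
    refine ⟨a.take j :: L, ?_, by simp [hflat], by simp [hj, hsums]⟩
    rintro _ (_ | ⟨_, hmem⟩)
    · intro h
      exact hb x (by simp) (by rw [← hj, h]; rfl)
    · exact hne _ hmem

theorem refines_flatt_iff {a b : List ℕ} :
    Refines (flatt a) (flatt b) ↔
      a.sum = b.sum ∧ (Set.range fun r => (b.take r).sum) ⊆ Set.range fun j => (a.take j).sum := by
  rw [← sum_flatt a, ← sum_flatt b, ← range_sum_take_flatt a, ← range_sum_take_flatt b]
  exact ⟨fun h => ⟨h.sum_eq, h.range_sum_take_subset⟩, fun ⟨hsum, hsub⟩ =>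
    refines_of_range_sum_take_subset (fun _ => ne_zero_of_mem_flatt)
      (fun _ => ne_zero_of_mem_flatt) hsum hsub⟩

/-- Reading `l` as consecutive blocks of lengths `l[0], l[1], …`, the block containing
position `n`. -/
noncomputable def blockIndex (l : List ℕ) (n : ℕ) : ℕ := sInf {i | n < (l.take (i + 1)).sum}

section blockIndex

variable {l : List ℕ} {n : ℕ}

theorem blockIndex_lt_iff (hn : n < l.sum) (j : ℕ) :
    blockIndex l n < j ↔ n < (l.take j).sum := by
  have hne : {i | n < (l.take (i + 1)).sum}.Nonempty :=
    ⟨l.length, show n < (l.take (l.length + 1)).sum by rwa [List.take_of_length_le (by omega)]⟩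
  constructor
  · intro h
    exact (Nat.sInf_mem hne).trans_le (l.sum_take_le_sum_take h)
  · intro h
    obtain ⟨i, rfl⟩ : ∃ i, j = i + 1 := Nat.exists_eq_succ_of_ne_zero (by rintro rfl; simp at h)
    exact Nat.lt_succ_of_le (Nat.sInf_le h)

theorem blockIndex_eq_iff (hn : n < l.sum) (i : ℕ) :
    blockIndex l n = i ↔ (l.take i).sum ≤ n ∧ n < (l.take (i + 1)).sum := by
  rw [← not_lt, ← blockIndex_lt_iff hn, ← blockIndex_lt_iff hn]
  omega

theorem blockIndex_mono {n' : ℕ} (hn' : n' < l.sum) (h : n ≤ n') :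
    blockIndex l n ≤ blockIndex l n' := by
  by_contra! hlt
  have := (blockIndex_lt_iff hn' _).1 hlt
  exact lt_irrefl _ ((blockIndex_lt_iff (h.trans_lt hn') _).2 (h.trans_lt this))

end blockIndex

lemma mem_boxes {c : List ℕ} {p : ℕ × ℕ} : p ∈ boxes c ↔ p.2 < c.getD p.1 0 := by
  simp only [boxes, mem_filter, mem_product, mem_range]
  refine ⟨And.right, fun h => ⟨⟨?_, h.trans_le (c.getD_le_foldr_max _)⟩, h⟩⟩
  by_contra! hlen
  rw [List.getD_eq_default _ _ hlen] at h
  exact Nat.not_lt_zero _ h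

def boxPos (c : List ℕ) (p : ℕ × ℕ) : ℕ := (c.take p.1).sum + p.2

section boxPos

variable {c : List ℕ} {p q : ℕ × ℕ}

theorem boxPos_lt_sum_take_iff (hp : p ∈ boxes c) (n : ℕ) :
    boxPos c p < (c.take n).sum ↔ p.1 < n := by
  rw [mem_boxes] at hp
  unfold boxPos
  constructor
  · intro h
    by_contra! hn
    have := c.sum_take_le_sum_take hn
    omega
  · intro h
    have := c.sum_take_le_sum_take (Nat.succ_le_of_lt h)
    rw [List.sum_take_succ_getD] at this
    omega

theorem boxPos_lt_sum (hp : p ∈ boxes c) : boxPos c p < c.sum :=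
  ((boxPos_lt_sum_take_iff hp _).2 p.1.lt_succ_self).trans_le (c.sum_take_le_sum _)

theorem boxPos_le_boxPos_iff (hp : p ∈ boxes c) (hq : q ∈ boxes c) :
    boxPos c p ≤ boxPos c q ↔ boxLe p q := by
  have hpq := boxPos_lt_sum_take_iff hp q.1
  have hqp := boxPos_lt_sum_take_iff hq p.1
  unfold boxLe
  unfold boxPos at *
  rcases lt_trichotomy p.1 q.1 with h | h | h
  · have := hpq.2 h; omega
  · rw [h]; omega
  · have := hqp.2 h; omega

theorem boxPos_injOn : Set.InjOn (boxPos c) (boxes c) := by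
  intro p hp q hq h
  have h₁ := (boxPos_le_boxPos_iff hp hq).1 h.le
  have h₂ := (boxPos_le_boxPos_iff hq hp).1 h.ge
  unfold boxLe at h₁ h₂
  exact Prod.ext (by omega) (by omega)

theorem exists_boxPos_eq {n : ℕ} (hn : n < c.sum) : ∃ p ∈ boxes c, boxPos c p = n := by
  obtain ⟨h₁, h₂⟩ := (blockIndex_eq_iff hn _).1 rfl
  rw [List.sum_take_succ_getD] at h₂
  exact ⟨(blockIndex c n, n - (c.take (blockIndex c n)).sum), mem_boxes.2 (by dsimp only; omega),
    by simp only [boxPos]; omega⟩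

theorem card_filter_boxPos_mem (s : Finset ℕ) (hs : s ⊆ range c.sum) :
    #{b : {p // p ∈ boxes c} | boxPos c b ∈ s} = #s := by
  refine card_bij (fun b _ => boxPos c b) (fun b hb => (mem_filter.1 hb).2)
    (fun b _ b' _ h => Subtype.ext (boxPos_injOn b.2 b'.2 h)) fun n hn => ?_
  obtain ⟨p, hp, rfl⟩ := exists_boxPos_eq (mem_range.1 (hs hn))
  exact ⟨⟨p, hp⟩, by simpa using hn, rfl⟩

theorem card_filter_boxPos_lt {m : ℕ} (hm : m ≤ c.sum) :
    #{b : {p // p ∈ boxes c} | boxPos c b < m} = m := by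
  simpa using card_filter_boxPos_mem (c := c) (range m) (range_subset_range.2 hm)

theorem card_filter_fst_lt (n : ℕ) :
    #{b : {p // p ∈ boxes c} | b.1.1 < n} = (c.take n).sum := by
  rw [← card_filter_boxPos_lt (c.sum_take_le_sum n)]
  congr 1
  ext b
  simp [boxPos_lt_sum_take_iff b.2]

theorem card_univ_boxes : #(univ : Finset {p // p ∈ boxes c}) = c.sum := by
  rw [← card_filter_boxPos_lt le_rfl]
  congr 1
  ext b
  simp [boxPos_lt_sum b.2]

end boxPos

section Tableau

variable {c : List ℕ}

def content (T : {p // p ∈ boxes c} → Fin c.length) (i : Fin c.length) : ℕ := #{b | T b = i}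

theorem sum_take_ofFn_content (T : {p // p ∈ boxes c} → Fin c.length) (j : ℕ) :
    ((List.ofFn (content T)).take j).sum = #{b | (T b : ℕ) < j} := by
  rw [List.sum_take_ofFn, card_eq_sum_card_fiberwise (f := T) (t := {i | (i : ℕ) < j})
    fun b hb => by simpa using hb]
  refine sum_congr rfl fun i hi => congrArg card ?_
  ext b
  simp only [mem_filter, mem_univ, true_and] at hi ⊢
  exact ⟨fun h => ⟨h ▸ hi, h⟩, And.right⟩

theorem sum_ofFn_content (T : {p // p ∈ boxes c} → Fin c.length) :
    (List.ofFn (content T)).sum = c.sum := by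
  rw [← List.take_of_length_le (List.length_ofFn (f := content T)).le, sum_take_ofFn_content,
    ← card_univ_boxes]
  congr 1
  ext b
  simp

theorem content_le_sum (T : {p // p ∈ boxes c} → Fin c.length) (i : Fin c.length) :
    content T i ≤ c.sum :=
  card_univ_boxes (c := c) ▸ card_filter_le _ _

theorem prod_X_eq_prod_X_pow_content {R : Type*} [CommSemiring R]
    (T : {p // p ∈ boxes c} → Fin c.length) :
    ∏ b, (X (T b : ℕ) : MvPolynomial ℕ R) = ∏ i : Fin c.length, X (i : ℕ) ^ content T i := by
  rw [← prod_fiberwise univ T]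
  refine prod_congr rfl fun i _ => ?_
  rw [prod_congr rfl fun b hb => by rw [(mem_filter.1 hb).2], prod_const]
  rfl

namespace IsWCTFn

variable {T : {p // p ∈ boxes c} → Fin c.length} (hT : IsWCTFn c T)
include hT

theorem le_of_boxPos_le {b b' : {p // p ∈ boxes c}} (h : boxPos c b ≤ boxPos c b') :
    T b ≤ T b' :=
  hT.1 b b' ((boxPos_le_boxPos_iff b.2 b'.2).1 h)

theorem eq_blockIndex (b : {p // p ∈ boxes c}) :
    (T b : ℕ) = blockIndex (List.ofFn (content T)) (boxPos c b) := by
  refine eq_of_forall_gt_iff fun j => ?_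
  rw [blockIndex_lt_iff ((sum_ofFn_content T).symm ▸ boxPos_lt_sum b.2), sum_take_ofFn_content]
  constructor
  · intro h
    calc boxPos c b < boxPos c b + 1 := Nat.lt_succ_self _
      _ = #{b' : {p // p ∈ boxes c} | boxPos c b' < boxPos c b + 1} :=
        (card_filter_boxPos_lt (boxPos_lt_sum b.2)).symm
      _ ≤ #{b' | (T b' : ℕ) < j} := card_le_card fun b' hb' => by
        simp only [mem_filter, mem_univ, true_and] at hb' ⊢
        exact (Fin.le_def.1 (hT.le_of_boxPos_le (Nat.le_of_lt_succ hb'))).trans_lt h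
  · intro h
    by_contra! hj
    have : #{b' | (T b' : ℕ) < j} ≤ #{b' : {p // p ∈ boxes c} | boxPos c b' < boxPos c b} :=
      card_le_card fun b' hb' => by
        simp only [mem_filter, mem_univ, true_and] at hb' ⊢
        by_contra! hle
        exact absurd (Fin.le_def.1 (hT.le_of_boxPos_le hle)) (by omega)
    rw [card_filter_boxPos_lt (boxPos_lt_sum b.2).le] at this
    omega

theorem sum_take_le_sum_take_content (n : ℕ) :
    (c.take n).sum ≤ ((List.ofFn (content T)).take n).sum := by
  rw [sum_take_ofFn_content, ← card_filter_fst_lt]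
  exact card_le_card fun b hb => by
    simp only [mem_filter, mem_univ, true_and] at hb ⊢
    exact (hT.2.2 b).trans_lt hb

theorem exists_forall_lt_iff_fst_lt (r : ℕ) :
    ∃ j, ∀ b : {p // p ∈ boxes c}, (T b : ℕ) < j ↔ b.1.1 < r := by
  by_cases h : ∃ b : {p // p ∈ boxes c}, r ≤ b.1.1
  · obtain ⟨b₀, hb₀, hmin⟩ := exists_min_image {b | r ≤ b.1.1} T
      (by simpa [Finset.Nonempty] using h)
    simp only [mem_filter, mem_univ, true_and] at hb₀ hmin
    refine ⟨T b₀, fun b => ⟨fun hb => ?_, fun hb => hT.2.1 b b₀ (hb.trans_le hb₀)⟩⟩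
    by_contra! hrb
    exact absurd (hmin b hrb) (not_le.2 hb)
  · push Not at h
    exact ⟨c.length, fun b => ⟨fun _ => h b, fun _ => (T b).2⟩⟩

theorem range_sum_take_subset :
    (Set.range fun r => (c.take r).sum) ⊆
      Set.range fun j => ((List.ofFn (content T)).take j).sum := by
  rintro _ ⟨r, rfl⟩
  obtain ⟨j, hj⟩ := hT.exists_forall_lt_iff_fst_lt r
  refine ⟨j, show ((List.ofFn (content T)).take j).sum = (c.take r).sum from ?_⟩
  rw [sum_take_ofFn_content, ← card_filter_fst_lt]
  simp only [hj]

end IsWCTFn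

end Tableau

section OfContent

variable {c : List ℕ} {f : Fin c.length → ℕ}

theorem blockIndex_boxPos_lt_length (hf : (List.ofFn f).sum = c.sum) {p : ℕ × ℕ}
    (hp : p ∈ boxes c) : blockIndex (List.ofFn f) (boxPos c p) < c.length := by
  rw [blockIndex_lt_iff (hf ▸ boxPos_lt_sum hp), List.take_of_length_le (by simp), hf]
  exact boxPos_lt_sum hp

noncomputable def tableauOfContent (f : Fin c.length → ℕ) (hf : (List.ofFn f).sum = c.sum)
    (b : {p // p ∈ boxes c}) : Fin c.length :=
  ⟨blockIndex (List.ofFn f) (boxPos c b), blockIndex_boxPos_lt_length hf b.2⟩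

variable (hf : (List.ofFn f).sum = c.sum)

theorem isWCTFn_tableauOfContent (hdom : ∀ n, (c.take n).sum ≤ ((List.ofFn f).take n).sum)
    (hcut : (Set.range fun r => (c.take r).sum) ⊆
      Set.range fun j => ((List.ofFn f).take j).sum) :
    IsWCTFn c (tableauOfContent f hf) := by
  have hlt (b : {p // p ∈ boxes c}) : boxPos c b < (List.ofFn f).sum :=
    hf ▸ boxPos_lt_sum b.2
  refine ⟨fun b b' h => blockIndex_mono (hlt b') ((boxPos_le_boxPos_iff b.2 b'.2).2 h),
    fun b b' h => ?_, fun b => ?_⟩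
  · obtain ⟨j, hj⟩ := hcut ⟨b.1.1 + 1, rfl⟩
    simp only at hj
    have h₁ : blockIndex (List.ofFn f) (boxPos c b) < j := by
      rw [blockIndex_lt_iff (hlt b), hj, boxPos_lt_sum_take_iff b.2]
      exact Nat.lt_succ_self _
    have h₂ : ¬ blockIndex (List.ofFn f) (boxPos c b') < j := by
      rw [blockIndex_lt_iff (hlt b'), hj, boxPos_lt_sum_take_iff b'.2]
      omega
    exact Fin.lt_def.2 (lt_of_lt_of_le h₁ (not_lt.1 h₂))
  · refine Nat.le_of_lt_succ ((blockIndex_lt_iff (hlt b) _).2 ?_)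
    exact ((boxPos_lt_sum_take_iff b.2 _).2 (Nat.lt_succ_self _)).trans_le (hdom _)

theorem content_tableauOfContent : content (tableauOfContent f hf) = f := by
  funext i
  have hi : i.1 < (List.ofFn f).length := by simp
  have hIco : Ico ((List.ofFn f).take i).sum ((List.ofFn f).take (i + 1)).sum ⊆ range c.sum :=
    fun n hn => mem_range.2 ((mem_Ico.1 hn).2.trans_le (hf ▸ List.sum_take_le_sum _ _))
  calc content (tableauOfContent f hf) i
      = #{b : {p // p ∈ boxes c} | boxPos c b ∈
          Ico ((List.ofFn f).take i).sum ((List.ofFn f).take (i + 1)).sum} := by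
        refine congrArg card (filter_congr fun b _ => ?_)
        rw [mem_Ico, ← blockIndex_eq_iff (hf ▸ boxPos_lt_sum b.2), Fin.ext_iff]
        rfl
    _ = f i := by
        rw [card_filter_boxPos_mem _ hIco, Nat.card_Ico, List.sum_take_succ _ _ hi,
          List.getElem_ofFn, Fin.eta]
        omega

end OfContent

theorem slide_polynomial_eq (c : List ℕ) :
    (∑ T ∈ Finset.univ.filter (fun T : {p // p ∈ boxes c} → Fin c.length => IsWCTFn c T),
      ∏ b : {p // p ∈ boxes c}, (X ((T b : ℕ)) : MvPolynomial ℕ ℤ))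
    =
    (∑ d ∈ Finset.univ.filter
        (fun d : Fin c.length → Fin (c.sum + 1) =>
          Dominates (List.ofFn fun i => ((d i : ℕ))) c ∧
          Refines (flatt (List.ofFn fun i => ((d i : ℕ)))) (flatt c)),
      ∏ i : Fin c.length, (X ((i : ℕ)) : MvPolynomial ℕ ℤ) ^ ((d i : ℕ))) := by
  refine sum_bij (fun T _ i => ⟨content T i, Nat.lt_succ_of_le (content_le_sum T i)⟩)
    (fun T hT => ?_) (fun T₁ h₁ T₂ h₂ h => ?_) (fun d hd => ?_)
    (fun T _ => prod_X_eq_prod_X_pow_content T)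
  · simp only [mem_filter, mem_univ, true_and] at hT ⊢
    exact ⟨hT.sum_take_le_sum_take_content,
      refines_flatt_iff.2 ⟨sum_ofFn_content T, hT.range_sum_take_subset⟩⟩
  · have hcontent : content T₁ = content T₂ :=
      funext fun i => congrArg Fin.val (congrFun h i)
    funext b
    rw [Fin.ext_iff, (mem_filter.1 h₁).2.eq_blockIndex, (mem_filter.1 h₂).2.eq_blockIndex,
      hcontent]
  · obtain ⟨-, hdom, href⟩ := mem_filter.1 hd
    obtain ⟨hsum, hcut⟩ := refines_flatt_iff.1 href
    refine ⟨tableauOfContent _ hsum,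
      mem_filter.2 ⟨mem_univ _, isWCTFn_tableauOfContent hsum hdom hcut⟩, ?_⟩
    funext i
    exact Fin.ext (congrFun (content_tableauOfContent hsum) i)
end

section
/- Let (W,S) be a Coxeter system, Q a word in the generators S, π ∈ W, and W a backward-saturated set of reduced words for π such that some subsequence of Q lies in W. Then the complex Δ_W(Q,π) is vertex-decomposable. -/
/-!
STATEMENT 8: Let (W,S) be a Coxeter system, Q a word in the generators S, π ∈ W, and 𝒲 a
backward-saturated set of reduced words for π such that some subsequence of Q lies in 𝒲.
Then the complex Δ_𝒲(Q,π) is vertex-decomposable.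
-/

open scoped Classical

/-- `F` is a facet (inclusion-maximal face) of the abstract simplicial complex `Δ`. -/
def IsFacet {V : Type*} (Δ : Set (Finset V)) (F : Finset V) : Prop :=
  F ∈ Δ ∧ ∀ G ∈ Δ, F ⊆ G → F = G

/-- The complex `Δ` is pure: all facets have the same cardinality. -/
def IsPure {V : Type*} (Δ : Set (Finset V)) : Prop :=
  ∀ F G : Finset V, IsFacet Δ F → IsFacet Δ G → F.card = G.card

/-- The deletion of a vertex `v` from `Δ`. -/
def complexDel {V : Type*} (Δ : Set (Finset V)) (v : V) : Set (Finset V) :=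
  {G ∈ Δ | v ∉ G}

/-- The link of a vertex `v` in `Δ`. -/
def complexLink {V : Type*} (Δ : Set (Finset V)) (v : V) : Set (Finset V) :=
  {G | v ∉ G ∧ G ∈ Δ ∧ insert v G ∈ Δ}

/-- `Δ` is vertex-decomposable. -/
inductive VertexDecomposable {V : Type*} : Set (Finset V) → Prop
  | of_empty_face : VertexDecomposable {(∅ : Finset V)}
  | step (Δ : Set (Finset V)) (v : V) : IsPure Δ →
      VertexDecomposable (complexDel Δ v) → VertexDecomposable (complexLink Δ v) →
      VertexDecomposable Δ

/-- A set `Ws` of words is backward-saturated: either `Ws` is empty, or for each letter `σ`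
such that `Ws` contains a word beginning with `σ`, the set `Ws'_σ = {w | σ·w ∈ Ws}` is
backward-saturated and every word of `Ws` contains some word of `Ws'_σ` as a subsequence. -/
inductive BackSat {B : Type*} : Set (List B) → Prop
  | empty : BackSat (∅ : Set (List B))
  | step (Ws : Set (List B))
      (h1 : ∀ σ : B, (∃ w : List B, σ :: w ∈ Ws) → BackSat {w : List B | σ :: w ∈ Ws})
      (h2 : ∀ σ : B, (∃ w : List B, σ :: w ∈ Ws) →
        ∀ u ∈ Ws, ∃ w : List B, σ :: w ∈ Ws ∧ w.Sublist u) :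
      BackSat Ws

variable {B W : Type*} [Group W] {M : CoxeterMatrix B}

/-- The word at the positions of `Q` not in `P`. -/
def complementWord (Q : List B) (P : Finset (Fin Q.length)) : List B :=
  ((List.finRange Q.length).filter (fun i => i ∉ P)).map Q.get

/-- The complex `Δ_𝒲(Q,π)`: its faces are the subsets `P` of positions of `Q` such that the
complementary subword contains some word of `Ws` as a subsequence. -/
def DeltaW (Ws : Set (List B)) (Q : List B) : Set (Finset (Fin Q.length)) :=
  {P | ∃ w ∈ Ws, w.Sublist (complementWord Q P)}

/-!
Induction on `Q = σ :: Q'`, shedding the vertex at the first position. Its link is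
`Δ_𝒲(Q')`. A face avoiding it contains a word of `𝒲` inside `σ` followed by a subword of `Q'`;
by backward-saturation this happens exactly when a word of `𝒲'_σ` lies in that subword (or a
word of `𝒲` itself, if no word of `𝒲` begins with `σ`), so the deletion is the complex of a
backward-saturated set on `Q'`. If no word of `𝒲` lies in `Q'`, no face contains the vertex and
the complex equals this deletion. Purity holds because all words of `𝒲` have length `ℓ(π)` and
the complement of a facet is exactly such a word: otherwise one more position could be added.
-/

section Map

variable {V V' : Type*} (f : V ↪ V')

lemma IsFacet.exists_map_eq {Δ : Set (Finset V)} {F' : Finset V'}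
    (h : IsFacet (Finset.map f '' Δ) F') : ∃ F, IsFacet Δ F ∧ F.map f = F' := by
  obtain ⟨⟨F, hF, rfl⟩, hmax⟩ := h
  exact ⟨F, ⟨hF, fun G hG hFG =>
    Finset.map_injective f (hmax _ ⟨G, hG, rfl⟩ (Finset.map_subset_map.2 hFG))⟩, rfl⟩

lemma IsPure.image_map {Δ : Set (Finset V)} (h : IsPure Δ) : IsPure (Finset.map f '' Δ) := by
  intro F' G' hF' hG'
  obtain ⟨F, hF, rfl⟩ := hF'.exists_map_eq f
  obtain ⟨G, hG, rfl⟩ := hG'.exists_map_eq f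
  simpa using h F G hF hG

lemma complexDel_image_map (Δ : Set (Finset V)) (v : V) :
    complexDel (Finset.map f '' Δ) (f v) = Finset.map f '' complexDel Δ v := by
  ext G
  constructor
  · rintro ⟨⟨F, hF, rfl⟩, hv⟩
    exact ⟨F, ⟨hF, by simpa using hv⟩, rfl⟩
  · rintro ⟨F, ⟨hF, hv⟩, rfl⟩
    exact ⟨⟨F, hF, rfl⟩, by simpa using hv⟩

lemma complexLink_image_map (Δ : Set (Finset V)) (v : V) :
    complexLink (Finset.map f '' Δ) (f v) = Finset.map f '' complexLink Δ v := by
  ext G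
  constructor
  · rintro ⟨hv, ⟨F, hF, rfl⟩, hins⟩
    rw [← Finset.map_insert, (Finset.map_injective f).mem_set_image] at hins
    exact ⟨F, ⟨by simpa using hv, hF, hins⟩, rfl⟩
  · rintro ⟨F, ⟨hv, hF, hins⟩, rfl⟩
    refine ⟨by simpa using hv, ⟨F, hF, rfl⟩, ?_⟩
    rw [← Finset.map_insert]
    exact Set.mem_image_of_mem _ hins

lemma VertexDecomposable.image_map {Δ : Set (Finset V)} (h : VertexDecomposable Δ) :
    VertexDecomposable (Finset.map f '' Δ) := by
  induction h with
  | of_empty_face => simpa using VertexDecomposable.of_empty_face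
  | step Δ v hpure _ _ ihdel ihlink =>
    refine .step _ (f v) (hpure.image_map f) ?_ ?_
    · rwa [complexDel_image_map]
    · rwa [complexLink_image_map]

end Map

lemma Fin.exists_finset_eq_map_succEmb {n : ℕ} (R : Finset (Fin (n + 1))) :
    ∃ P : Finset (Fin n), R = P.map (Fin.succEmb n) ∨ R = insert 0 (P.map (Fin.succEmb n)) := by
  refine ⟨R.preimage Fin.succ (Fin.succ_injective n).injOn, ?_⟩
  by_cases h0 : (0 : Fin (n + 1)) ∈ R
  · right
    ext j
    cases j using Fin.cases <;> simp [h0, Fin.succ_ne_zero]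
  · left
    ext j
    cases j using Fin.cases <;> simp [h0]

section ComplementWord

variable (a : B) (l : List B)

lemma complementWord_sublist (Q : List B) (P : Finset (Fin Q.length)) :
    (complementWord Q P).Sublist Q := by
  simpa [complementWord] using (List.filter_sublist (l := List.finRange Q.length)).map Q.get

lemma complementWord_cons_map_succEmb (P : Finset (Fin l.length)) :
    complementWord (a :: l) (P.map (Fin.succEmb _)) = a :: complementWord l P := by
  simp [complementWord, List.finRange_succ, List.filter_map, Function.comp_def]

-- Instance-generic, so that it also applies to the classical `insert` inside `complexLink`.
lemma complementWord_cons_insert_zero [DecidableEq (Fin (l.length + 1))]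
    (P : Finset (Fin l.length)) :
    complementWord (a :: l) (insert 0 (P.map (Fin.succEmb _))) = complementWord l P := by
  simp [complementWord, List.finRange_succ, List.filter_map, Function.comp_def]

end ComplementWord

lemma length_complementWord_add_card (Q : List B) (P : Finset (Fin Q.length)) :
    (complementWord Q P).length + P.card = Q.length := by
  induction Q with
  | nil => simp [complementWord, Finset.eq_empty_of_forall_notMem fun i _ => Fin.elim0 i]
  | cons a l ih =>
    obtain ⟨P, rfl | rfl⟩ := Fin.exists_finset_eq_map_succEmb P
    · rw [complementWord_cons_map_succEmb, Finset.card_map, List.length_cons, List.length_cons]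
      linarith [ih P]
    · rw [complementWord_cons_insert_zero, Finset.card_insert_of_notMem (by simp),
        Finset.card_map, List.length_cons]
      linarith [ih P]

lemma exists_insert_sublist_complementWord {w Q : List B} {P : Finset (Fin Q.length)}
    (hw : w.Sublist (complementWord Q P)) (hlt : w.length < (complementWord Q P).length) :
    ∃ i ∉ P, w.Sublist (complementWord Q (insert i P)) := by
  induction Q generalizing w with
  | nil => simp [complementWord] at hlt
  | cons a l ih =>
    obtain ⟨P, rfl | rfl⟩ := Fin.exists_finset_eq_map_succEmb P
    · rw [complementWord_cons_map_succEmb] at hw hlt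
      rcases List.sublist_cons_iff.1 hw with hw | ⟨r, rfl, hr⟩
      · exact ⟨0, by simp, by rwa [complementWord_cons_insert_zero]⟩
      · obtain ⟨i, hi, hri⟩ := ih hr (by simpa using hlt)
        refine ⟨Fin.succEmb _ i, by simpa using hi, ?_⟩
        rw [← Finset.map_insert, complementWord_cons_map_succEmb]
        exact hri.cons_cons a
    · rw [complementWord_cons_insert_zero] at hw hlt
      obtain ⟨i, hi, hwi⟩ := ih hw hlt
      refine ⟨Fin.succEmb _ i, by simpa [Fin.succ_ne_zero] using hi, ?_⟩
      rwa [Finset.insert_comm, ← Finset.map_insert, complementWord_cons_insert_zero]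

section DeltaW

variable {Ws : Set (List B)}

lemma deltaW_nil (h : ∃ w ∈ Ws, w.Sublist []) : DeltaW Ws [] = {∅} := by
  obtain ⟨w, hw, hnil⟩ := h
  ext P
  obtain rfl : P = ∅ := Finset.eq_empty_of_forall_notMem fun i _ => Fin.elim0 i
  exact iff_of_true ⟨w, hw, by simpa [complementWord] using hnil⟩ rfl

lemma length_complementWord_eq_of_isFacet {Q w : List B} {F : Finset (Fin Q.length)}
    (hF : IsFacet (DeltaW Ws Q) F) (hw : w ∈ Ws) (hsub : w.Sublist (complementWord Q F)) :
    (complementWord Q F).length = w.length := by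
  refine le_antisymm (not_lt.1 fun hlt => ?_) hsub.length_le
  obtain ⟨i, hi, hwi⟩ := exists_insert_sublist_complementWord hsub hlt
  exact hi (hF.2 _ ⟨w, hw, hwi⟩ (Finset.subset_insert i F) ▸ Finset.mem_insert_self i F)

lemma isPure_deltaW (hlen : (List.length '' Ws).Subsingleton) (Q : List B) :
    IsPure (DeltaW Ws Q) := by
  intro F G hF hG
  obtain ⟨u, hu, huF⟩ := hF.1
  obtain ⟨v, hv, hvG⟩ := hG.1
  have := length_complementWord_add_card Q F
  have := length_complementWord_add_card Q G
  have := length_complementWord_eq_of_isFacet hF hu huF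
  have := length_complementWord_eq_of_isFacet hG hv hvG
  have := hlen (Set.mem_image_of_mem _ hu) (Set.mem_image_of_mem _ hv)
  omega

variable (a : B) (l : List B)

lemma complexLink_deltaW_cons :
    complexLink (DeltaW Ws (a :: l)) (0 : Fin (l.length + 1)) =
      Finset.map (Fin.succEmb _) '' DeltaW Ws l := by
  ext R
  constructor
  · rintro ⟨h0, -, w, hw, hsub⟩
    obtain ⟨P, rfl | rfl⟩ := Fin.exists_finset_eq_map_succEmb R
    · rw [complementWord_cons_insert_zero] at hsub
      exact ⟨P, ⟨w, hw, hsub⟩, rfl⟩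
    · simp at h0
  · rintro ⟨P, ⟨w, hw, hsub⟩, rfl⟩
    refine ⟨by simp, ⟨w, hw, ?_⟩, ⟨w, hw, ?_⟩⟩
    · rw [complementWord_cons_map_succEmb]
      exact hsub.cons a
    · rwa [complementWord_cons_insert_zero]

lemma complexDel_deltaW_cons {Ws' : Set (List B)}
    (h : ∀ t, (∃ w ∈ Ws, w.Sublist (a :: t)) ↔ ∃ w ∈ Ws', w.Sublist t) :
    complexDel (DeltaW Ws (a :: l)) (0 : Fin (l.length + 1)) =
      Finset.map (Fin.succEmb _) '' DeltaW Ws' l := by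
  ext R
  constructor
  · rintro ⟨⟨w, hw, hsub⟩, h0⟩
    obtain ⟨P, rfl | rfl⟩ := Fin.exists_finset_eq_map_succEmb R
    · rw [complementWord_cons_map_succEmb] at hsub
      exact ⟨P, (h _).1 ⟨w, hw, hsub⟩, rfl⟩
    · simp at h0
  · rintro ⟨P, hP, rfl⟩
    obtain ⟨w, hw, hsub⟩ := (h _).2 hP
    refine ⟨⟨w, hw, ?_⟩, by simp⟩
    rwa [complementWord_cons_map_succEmb]

lemma deltaW_cons_eq_complexDel (h : ¬∃ w ∈ Ws, w.Sublist l) :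
    DeltaW Ws (a :: l) = complexDel (DeltaW Ws (a :: l)) (0 : Fin (l.length + 1)) := by
  ext R
  refine ⟨fun hR => ⟨hR, fun h0 => ?_⟩, fun hR => hR.1⟩
  obtain ⟨w, hw, hsub⟩ := hR
  obtain ⟨P, rfl | rfl⟩ := Fin.exists_finset_eq_map_succEmb R
  · simp at h0
  · rw [complementWord_cons_insert_zero] at hsub
    exact h ⟨w, hw, hsub.trans (complementWord_sublist l P)⟩

end DeltaW

lemma BackSat.exists_residual {Ws : Set (List B)} (hbs : BackSat Ws)
    (hlen : (List.length '' Ws).Subsingleton) (a : B) :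
    ∃ Ws', BackSat Ws' ∧ (List.length '' Ws').Subsingleton ∧
      ∀ t, (∃ w ∈ Ws, w.Sublist (a :: t)) ↔ ∃ w ∈ Ws', w.Sublist t := by
  by_cases hA : ∃ w, a :: w ∈ Ws
  · obtain ⟨hbs', hsat⟩ : BackSat {w | a :: w ∈ Ws} ∧
        ∀ u ∈ Ws, ∃ w, a :: w ∈ Ws ∧ w.Sublist u := by
      cases hbs with
      | empty => simp at hA
      | step _ h1 h2 => exact ⟨h1 a hA, h2 a hA⟩
    refine ⟨_, hbs', ?_, fun t => ⟨?_, ?_⟩⟩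
    · rintro _ ⟨w, hw, rfl⟩ _ ⟨w', hw', rfl⟩
      simpa using hlen (Set.mem_image_of_mem _ hw) (Set.mem_image_of_mem _ hw')
    · rintro ⟨u, hu, hut⟩
      rcases List.sublist_cons_iff.1 hut with hut | ⟨w, rfl, hwt⟩
      · obtain ⟨w, hw, hwu⟩ := hsat u hu
        exact ⟨w, hw, hwu.trans hut⟩
      · exact ⟨w, hu, hwt⟩
    · rintro ⟨w, hw, hwt⟩
      exact ⟨a :: w, hw, hwt.cons_cons a⟩
  · refine ⟨Ws, hbs, hlen, fun t => exists_congr fun w => and_congr_right fun hw =>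
      ⟨fun hwt => ?_, (·.cons a)⟩⟩
    rcases List.sublist_cons_iff.1 hwt with hwt | ⟨r, rfl, -⟩
    · exact hwt
    · exact absurd ⟨r, hw⟩ hA

theorem vertexDecomposable_deltaW_of_backSat {Ws : Set (List B)} {Q : List B} (hbs : BackSat Ws)
    (hlen : (List.length '' Ws).Subsingleton) (hQ : ∃ w ∈ Ws, w.Sublist Q) :
    VertexDecomposable (DeltaW Ws Q) := by
  induction Q generalizing Ws with
  | nil => exact deltaW_nil hQ ▸ .of_empty_face
  | cons a l ih =>
    obtain ⟨Ws', hbs', hlen', hres⟩ := hbs.exists_residual hlen a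
    have hdel := complexDel_deltaW_cons a l hres
    have hdelVD := (ih hbs' hlen' ((hres l).1 hQ)).image_map (Fin.succEmb _)
    by_cases hl : ∃ w ∈ Ws, w.Sublist l
    · refine .step _ 0 (isPure_deltaW hlen _) (hdel ▸ hdelVD) ?_
      rw [complexLink_deltaW_cons]
      exact (ih hbs hlen hl).image_map _
    · rw [deltaW_cons_eq_complexDel a l hl, hdel]
      exact hdelVD

theorem deltaW_vertexDecomposable (cs : CoxeterSystem M W) (Q : List B) (π : W)
    (Ws : Set (List B))
    (hred : ∀ w ∈ Ws, cs.IsReduced w ∧ cs.wordProd w = π)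
    (hbs : BackSat Ws)
    (hQ : ∃ w ∈ Ws, w.Sublist Q) :
    VertexDecomposable (DeltaW Ws Q) := by
  refine vertexDecomposable_deltaW_of_backSat hbs ?_ hQ
  rintro _ ⟨u, hu, rfl⟩ _ ⟨v, hv, rfl⟩
  rw [← (hred u hu).1, ← (hred v hv).1, (hred u hu).2, (hred v hv).2]
end

section
/- Let (W,S) be a Coxeter system and π ∈ W. Then: (1) for every reduced word w for π, the singleton set {w} is backward-saturated; and (2) the set RW(π) of all reduced words for π is backward-saturated. -/
/-!
A letter `σ` begins a reduced word for `π` exactly when `σ` is a left descent of `π`, and then the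
reduced words for `π` beginning with `σ` are the words `σ :: v` with `v` reduced for `σπ`. So
induction on `ℓ(π)` reduces backward saturation of `RW(π)` to the exchange property: if `σ` is a
left descent of `π`, deleting a suitable letter of any word for `π` gives a word for `σπ`.

The exchange property comes from the action of `W` on `W × ZMod 2` in which `s_i` acts by
`(w, e) ↦ (s_i w s_i, e + [w = s_i])`. It satisfies the Coxeter relations because `(s_i s_j)^k`
adds the indicators of `w = s_j r^l` for `l < 2k`, where `r = s_i s_j`, and these cancel in pairs
when `r^k = 1`. The word `ω` adds to `e` the number of occurrences of `π(ω) w π(ω)⁻¹` in the left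
inversion sequence of `ω`, so the parity of the number of occurrences of any `t` there depends only
on `π(ω)`. For a left descent `s_σ` of `π(ω)` this parity is odd, as one sees on a reduced word
`σ :: v` for `π(ω)`, whose left inversion sequence has no repetitions and begins with `s_σ`.
Hence `s_σ` occurs in the left inversion sequence of `ω`, which is the exchange property.
-/

theorem backSat_singleton {α : Type*} (w : List α) : BackSat {w} := by
  induction w with
  | nil => exact .step _ (fun _ ⟨_, h⟩ => by simp at h) (fun _ ⟨_, h⟩ => by simp at h)
  | cons a t ih =>
    refine .step _ (fun σ ⟨v, hv⟩ => ?_) (fun σ ⟨v, hv⟩ u hu => ?_)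
    · obtain ⟨rfl, rfl⟩ := List.cons_eq_cons.mp hv
      convert ih using 1
      ext
      simp
    · obtain ⟨rfl, rfl⟩ := List.cons_eq_cons.mp hv
      exact ⟨v, rfl, hu ▸ List.sublist_cons_self σ v⟩

section SignedConj

open scoped Classical

variable {G : Type*} [Group G]

noncomputable def signedConj (a : G) (ha : a * a = 1) : Equiv.Perm (G × ZMod 2) :=
  Function.Involutive.toPerm (fun p => (a * p.1 * a⁻¹, p.2 + if p.1 = a then 1 else 0)) <| by
    rintro ⟨w, e⟩
    have hfix : a * w * a⁻¹ = a ↔ w = a := by rw [mul_inv_eq_iff_eq_mul, mul_right_inj]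
    have hsq : a * (a * w * a⁻¹) * a⁻¹ = w := by
      calc a * (a * w * a⁻¹) * a⁻¹ = (a * a) * w * (a * a)⁻¹ := by group
        _ = w := by rw [ha]; group
    simp only [hfix, hsq, add_assoc, CharTwo.add_self_eq_zero, add_zero]

theorem signedConj_apply (a : G) (ha : a * a = 1) (w : G) (e : ZMod 2) :
    signedConj a ha (w, e) = (a * w * a⁻¹, e + if w = a then 1 else 0) := rfl

theorem mul_mul_inv_eq_iff_eq_inv_mul_mul (x w c : G) : x * w * x⁻¹ = c ↔ w = x⁻¹ * c * x :=
  ⟨fun h => by rw [← h]; group, fun h => by rw [h]; group⟩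

variable {a b : G} (ha : a * a = 1) (hb : b * b = 1)

theorem signedConj_mul_apply (w : G) (e : ZMod 2) :
    (signedConj a ha * signedConj b hb) (w, e) =
      (a * b * w * (a * b)⁻¹,
        e + ((if w = b then 1 else 0) + if w = b * (a * b) then 1 else 0)) := by
  have hba : b⁻¹ * a * b = b * (a * b) := by rw [inv_eq_of_mul_eq_one_right hb, mul_assoc]
  rw [Equiv.Perm.mul_apply, signedConj_apply, signedConj_apply,
    mul_mul_inv_eq_iff_eq_inv_mul_mul, hba, add_assoc]
  simp only [mul_inv_rev, mul_assoc]

theorem signedConj_mul_pow_apply (k : ℕ) (w : G) (e : ZMod 2) :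
    ((signedConj a ha * signedConj b hb) ^ k) (w, e) =
      ((a * b) ^ k * w * ((a * b) ^ k)⁻¹,
        e + ∑ l ∈ Finset.range (2 * k), if w = b * (a * b) ^ l then 1 else 0) := by
  have hshift (l : ℕ) : (a * b)⁻¹ * (b * (a * b) ^ l) * (a * b) = b * (a * b) ^ (l + 2) := by
    rw [mul_inv_rev, inv_eq_of_mul_eq_one_right ha, inv_eq_of_mul_eq_one_right hb, pow_succ',
      pow_succ]
    simp only [mul_assoc]
  induction k generalizing w e with
  | zero => simp
  | succ k ih =>
    rw [pow_succ, Equiv.Perm.mul_apply, signedConj_mul_apply, ih, Nat.mul_succ,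
      Finset.sum_range_succ', Finset.sum_range_succ']
    refine Prod.ext ?_ ?_
    · simp only [pow_succ, mul_inv_rev, mul_assoc]
    · simp only [mul_mul_inv_eq_iff_eq_inv_mul_mul, hshift, pow_zero, mul_one, zero_add, pow_one]
      ring

theorem signedConj_mul_pow_eq_one {m : ℕ} (hm : (a * b) ^ m = 1) :
    (signedConj a ha * signedConj b hb) ^ m = 1 := by
  ext ⟨w, e⟩ : 1
  rw [signedConj_mul_pow_apply, two_mul, Finset.sum_range_add]
  simp only [pow_add, hm, one_mul, inv_one, mul_one, CharTwo.add_self_eq_zero, add_zero,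
    Equiv.Perm.one_apply]

end SignedConj

namespace CoxeterSystem

open scoped Classical

variable {B W : Type*} [Group W] {M : CoxeterMatrix B} (cs : CoxeterSystem M W)

theorem isLiftable_signedConj :
    M.IsLiftable fun i => signedConj (cs.simple i) (cs.simple_mul_simple_self i) :=
  fun i j => signedConj_mul_pow_eq_one _ _ (cs.simple_mul_simple_pow i j)

noncomputable def signedConjRep : W →* Equiv.Perm (W × ZMod 2) :=
  cs.lift ⟨_, cs.isLiftable_signedConj⟩

theorem signedConjRep_simple (i : B) :
    cs.signedConjRep (cs.simple i) = signedConj (cs.simple i) (cs.simple_mul_simple_self i) :=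
  cs.lift_apply_simple cs.isLiftable_signedConj i

theorem signedConjRep_wordProd_apply (ω : List B) (w : W) (e : ZMod 2) :
    cs.signedConjRep (cs.wordProd ω) (w, e) =
      (MulAut.conj (cs.wordProd ω) w,
        e + (cs.leftInvSeq ω).count (MulAut.conj (cs.wordProd ω) w)) := by
  induction ω with
  | nil => simp
  | cons i ω ih =>
    set x := MulAut.conj (cs.wordProd ω) w
    have hx : MulAut.conj (cs.wordProd (i :: ω)) w = MulAut.conj (cs.simple i) x := by
      rw [cs.wordProd_cons, map_mul, MulAut.mul_apply]
    have hfix : cs.simple i = MulAut.conj (cs.simple i) x ↔ x = cs.simple i := by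
      rw [MulAut.conj_apply, eq_comm, mul_inv_eq_iff_eq_mul, mul_right_inj]
    rw [hx, cs.wordProd_cons, map_mul, Equiv.Perm.mul_apply, ih, signedConjRep_simple,
      signedConj_apply, leftInvSeq, List.count_cons,
      List.count_map_of_injective _ _ (MulAut.conj _).injective]
    simp only [beq_iff_eq, hfix, Nat.cast_add, Nat.cast_ite, Nat.cast_one, Nat.cast_zero,
      add_assoc]
    rfl

theorem count_leftInvSeq_cast_eq_of_wordProd_eq {ω₁ ω₂ : List B}
    (h : cs.wordProd ω₁ = cs.wordProd ω₂) (t : W) :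
    ((cs.leftInvSeq ω₁).count t : ZMod 2) = (cs.leftInvSeq ω₂).count t := by
  obtain ⟨w, rfl⟩ := (MulAut.conj (cs.wordProd ω₁)).surjective t
  have key := congrArg (fun g => (cs.signedConjRep g (w, 0)).2) h
  simp only [signedConjRep_wordProd_apply, zero_add] at key
  rwa [← h] at key

theorem simple_mem_leftInvSeq_of_isLeftDescent {ω : List B} {i : B}
    (hi : cs.IsLeftDescent (cs.wordProd ω) i) : cs.simple i ∈ cs.leftInvSeq ω := by
  obtain ⟨v, hv, hv_prod⟩ := cs.exists_isReduced (cs.simple i * cs.wordProd ω)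
  have hprod : cs.wordProd (i :: v) = cs.wordProd ω := by
    rw [cs.wordProd_cons, ← hv_prod, ← mul_assoc, cs.simple_mul_simple_self, one_mul]
  have hred : cs.IsReduced (i :: v) := by
    rw [IsReduced, hprod, List.length_cons, ← hv, ← hv_prod]
    exact (cs.isLeftDescent_iff.mp hi).symm
  have hcount : (cs.leftInvSeq (i :: v)).count (cs.simple i) = 1 :=
    List.count_eq_one_of_mem hred.nodup_leftInvSeq List.mem_cons_self
  have hodd := cs.count_leftInvSeq_cast_eq_of_wordProd_eq hprod (cs.simple i)
  rw [hcount, Nat.cast_one] at hodd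
  refine List.count_pos_iff.mp (Nat.pos_of_ne_zero fun h0 => ?_)
  rw [h0, Nat.cast_zero] at hodd
  exact one_ne_zero hodd

theorem exists_wordProd_eraseIdx_of_isLeftDescent {ω : List B} {i : B}
    (hi : cs.IsLeftDescent (cs.wordProd ω) i) :
    ∃ j < ω.length, cs.wordProd (ω.eraseIdx j) = cs.simple i * cs.wordProd ω := by
  obtain ⟨j, hj, hji⟩ :=
    List.mem_iff_getElem.mp (cs.simple_mem_leftInvSeq_of_isLeftDescent hi)
  refine ⟨j, by simpa using hj, ?_⟩
  rw [← cs.getD_leftInvSeq_mul_wordProd, List.getD_eq_getElem _ _ hj, hji]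

def reducedWords (w : W) : Set (List B) := {ω | cs.IsReduced ω ∧ cs.wordProd ω = w}

variable {cs}

theorem isLeftDescent_of_cons_mem_reducedWords {w : W} {i : B} {ω : List B}
    (h : i :: ω ∈ cs.reducedWords w) : cs.IsLeftDescent w i := by
  obtain ⟨hred, rfl⟩ := h
  have hlen : cs.length (cs.wordProd (i :: ω)) = ω.length + 1 := hred
  have hprod : cs.simple i * cs.wordProd (i :: ω) = cs.wordProd ω := by
    rw [cs.wordProd_cons, ← mul_assoc, cs.simple_mul_simple_self, one_mul]
  have hle := cs.length_wordProd_le ω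
  rw [IsLeftDescent, hprod, hlen]
  omega

theorem cons_mem_reducedWords_iff {w : W} {i : B} (hi : cs.IsLeftDescent w i) {ω : List B} :
    i :: ω ∈ cs.reducedWords w ↔ ω ∈ cs.reducedWords (cs.simple i * w) := by
  have hprod : cs.wordProd (i :: ω) = w ↔ cs.wordProd ω = cs.simple i * w := by
    rw [cs.wordProd_cons, ← cs.inv_simple i, eq_inv_mul_iff_mul_eq, cs.inv_simple]
  rw [cs.isLeftDescent_iff] at hi
  simp only [reducedWords, Set.mem_ofPred_eq, IsReduced, List.length_cons, hprod]
  refine and_congr_left fun h => ?_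
  rw [hprod.mpr h, h]
  omega

theorem exists_sublist_mem_reducedWords_simple_mul {w : W} {i : B} (hi : cs.IsLeftDescent w i)
    {ω : List B} (hω : ω ∈ cs.reducedWords w) :
    ∃ v ∈ cs.reducedWords (cs.simple i * w), v.Sublist ω := by
  obtain ⟨hred, rfl⟩ := hω
  obtain ⟨j, hj, hprod⟩ := cs.exists_wordProd_eraseIdx_of_isLeftDescent hi
  refine ⟨ω.eraseIdx j, ⟨?_, hprod⟩, List.eraseIdx_sublist ω j⟩
  have hlen := List.length_eraseIdx_add_one hj
  rw [cs.isLeftDescent_iff, hred.eq] at hi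
  rw [IsReduced, hprod]
  omega

variable (cs) in
theorem backSat_reducedWords (w : W) : BackSat (cs.reducedWords w) := by
  induction hn : cs.length w using Nat.strong_induction_on generalizing w with
  | _ n ih =>
  refine .step _ (fun σ ⟨v, hv⟩ => ?_) (fun σ ⟨v, hv⟩ u hu => ?_)
  · have hσ := isLeftDescent_of_cons_mem_reducedWords hv
    rw [show {v | σ :: v ∈ cs.reducedWords w} = cs.reducedWords (cs.simple σ * w) from
      Set.ext fun _ => cons_mem_reducedWords_iff hσ]
    exact ih _ (hn ▸ hσ) _ rfl
  · have hσ := isLeftDescent_of_cons_mem_reducedWords hv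
    obtain ⟨u', hu', hsub⟩ := exists_sublist_mem_reducedWords_simple_mul hσ hu
    exact ⟨u', (cons_mem_reducedWords_iff hσ).mpr hu', hsub⟩

end CoxeterSystem

variable {B W : Type*} [Group W] {M : CoxeterMatrix B}

theorem singleton_and_allReducedWords_backSat (cs : CoxeterSystem M W) (π : W) :
    (∀ w : List B, cs.IsReduced w → cs.wordProd w = π → BackSat {w}) ∧
    BackSat {w : List B | cs.IsReduced w ∧ cs.wordProd w = π} :=
  ⟨fun w _ _ => backSat_singleton w, cs.backSat_reducedWords π⟩
end

section
/- Let (W,S) be a Coxeter system, π ∈ W, and Q = σ_n ⋯ σ_1 a word in the generators (positions indexed from the right) such that some subsequence of Q is a reduced word for π. Define words w_0, w_1, …, w_n by: w_0 is the empty word, and w_k = σ_k w_{k-1} if some reduced word for π has σ_k w_{k-1} as a suffix, and w_k = w_{k-1} otherwise. Then w_n is a reduced word for π. -/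
/-!
STATEMENT 11: Let (W,S) be a Coxeter system, π ∈ W, and Q = σ_n ⋯ σ_1 a word in the
generators (positions indexed from the right) such that some subsequence of Q is a reduced
word for π. Define words w_0, w_1, …, w_n by: w_0 is the empty word, and
w_k = σ_k w_{k-1} if some reduced word for π has σ_k w_{k-1} as a suffix, and
w_k = w_{k-1} otherwise. Then w_n is a reduced word for π.

Convention: the word `Q = σ_n ⋯ σ_1` is the Lean list `[σ_n, σ_{n-1}, …, σ_1]`; the
recursion producing `w_n` from `Q` peels off the head `σ_n` and first computes
`w_{n-1}` from the tail.
-/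

open scoped Classical

variable {B W : Type*} [Group W] {M : CoxeterMatrix B}

/-- The rightmost subword construction: `rightmostWord cs π [σ_n, …, σ_1] = w_n` where
`w_0 = []` and `w_k = σ_k :: w_{k-1}` if some reduced word for `π` has `σ_k w_{k-1}` as a
suffix, and `w_k = w_{k-1}` otherwise. -/
noncomputable def rightmostWord (cs : CoxeterSystem M W) (π : W) : List B → List B
  | [] => []
  | σ :: rest =>
      let w := rightmostWord cs π rest
      if ∃ u : List B, cs.IsReduced u ∧ cs.wordProd u = π ∧ (σ :: w).IsSuffix u
      then σ :: w else w


/-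
Invariant: after reading σ_k ⋯ σ_1 there is a reduced word for π of the form `v ++ w_k` with
`v` a subword of σ_n ⋯ σ_{k+1}. If `w_{k+1} = σ_{k+1} :: w_k` but `v` does not end in σ_{k+1},
then a reduced word `v₀ ++ σ_{k+1} :: w_k` for π gives `π v₀ = π v · s`, shorter than `v`; so
`s = s_{σ_{k+1}}` is a right descent of `π v`, and the exchange condition deletes one letter of
`v` to get `v'` with `π v' · s = π v`.

The exchange condition comes from the parity representation of W on `W × ZMod 2`, in which `s_i`
acts by `(t, ε) ↦ (s_i t s_i, ε + [t = s_i])`. A word ω acts by adding to ε the number of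
occurrences of `t` in its right inversion sequence, so this number mod 2 depends only on `π ω`.
The Coxeter relations hold because the left inversion sequence of an alternating word of length
`2 m(i, j)` is periodic with period `m(i, j)`.
-/

theorem List.even_count_of_drop_eq_take {α : Type*} [BEq α] {L : List α} {m : ℕ}
    (h : L.drop m = L.take m) (a : α) : Even (L.count a) := by
  rw [← L.take_append_drop m, List.count_append, h]
  exact ⟨_, rfl⟩

namespace CoxeterSystem

variable (cs : CoxeterSystem M W)

theorem alternatingWord_two_mul_succ (i j : B) (p : ℕ) :
    alternatingWord i j (2 * (p + 1)) = i :: j :: alternatingWord i j (2 * p) := by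
  rw [show 2 * (p + 1) = 2 * p + 1 + 1 by ring, alternatingWord_succ', alternatingWord_succ']
  simp

theorem reverse_alternatingWord_two_mul (i j : B) (p : ℕ) :
    (alternatingWord i j (2 * p)).reverse = alternatingWord j i (2 * p) := by
  induction p with
  | zero => rfl
  | succ p ih =>
    rw [alternatingWord_two_mul_succ, List.reverse_cons, List.reverse_cons, ih,
      show 2 * (p + 1) = 2 * p + 1 + 1 by ring]
    simp [alternatingWord_succ]

theorem drop_eq_take_leftInvSeq_alternatingWord (i j : B) :
    (cs.leftInvSeq (alternatingWord j i (2 * M i j))).drop (M i j) =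
      (cs.leftInvSeq (alternatingWord j i (2 * M i j))).take (M i j) := by
  have hlen : (cs.leftInvSeq (alternatingWord j i (2 * M i j))).length = 2 * M i j := by simp
  refine List.ext_getElem (by simp only [List.length_drop, List.length_take, hlen]; omega)
    fun k hk _ => ?_
  have hk' : k < M i j := by rw [List.length_drop, hlen] at hk; omega
  simp only [List.getElem_drop, List.getElem_take]
  rw [getElem_leftInvSeq_alternatingWord _ _ _ _ _ (by omega),
    getElem_leftInvSeq_alternatingWord _ _ _ _ _ (by omega),
    prod_alternatingWord_eq_mul_pow, prod_alternatingWord_eq_mul_pow,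
    if_neg (Nat.not_even_two_mul_add_one _), if_neg (Nat.not_even_two_mul_add_one _),
    show (2 * (M i j + k) + 1) / 2 = M i j + k by omega, show (2 * k + 1) / 2 = k by omega,
    pow_add, simple_mul_simple_pow, one_mul]

theorem even_count_rightInvSeq_alternatingWord (i j : B) (t : W) :
    Even ((cs.rightInvSeq (alternatingWord i j (2 * M i j))).count t) := by
  rw [← List.reverse_reverse (alternatingWord i j _), rightInvSeq_reverse, List.count_reverse,
    reverse_alternatingWord_two_mul]
  exact List.even_count_of_drop_eq_take (cs.drop_eq_take_leftInvSeq_alternatingWord i j) t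

noncomputable def parityPerm (i : B) : Equiv.Perm (W × ZMod 2) :=
  Function.Involutive.toPerm
    (fun p => (cs.simple i * p.1 * cs.simple i, p.2 + if p.1 = cs.simple i then 1 else 0))
    (by
      rintro ⟨t, ε⟩
      have hconj : cs.simple i * t * cs.simple i = cs.simple i ↔ t = cs.simple i := by
        rw [mul_eq_right, mul_eq_one_iff_inv_eq, inv_simple, eq_comm]
      simp only [hconj, add_assoc, CharTwo.add_self_eq_zero, add_zero, Prod.mk.injEq, and_true]
      simp [mul_assoc])

theorem parityPerm_apply (i : B) (t : W) (ε : ZMod 2) :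
    cs.parityPerm i (t, ε) =
      (cs.simple i * t * cs.simple i, ε + if t = cs.simple i then 1 else 0) :=
  rfl

theorem prod_map_parityPerm_apply (ω : List B) (t : W) (ε : ZMod 2) :
    (ω.map cs.parityPerm).prod (t, ε) =
      (cs.wordProd ω * t * (cs.wordProd ω)⁻¹, ε + (cs.rightInvSeq ω).count t) := by
  induction ω generalizing ε with
  | nil => simp
  | cons i ω ih =>
    have hconj : cs.wordProd ω * t * (cs.wordProd ω)⁻¹ = cs.simple i ↔
        (cs.wordProd ω)⁻¹ * cs.simple i * cs.wordProd ω = t := by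
      constructor <;> intro h <;> rw [← h] <;> group
    simp only [List.map_cons, List.prod_cons, Equiv.Perm.mul_apply, ih, parityPerm_apply,
      wordProd_cons, rightInvSeq, List.count_cons, hconj, beq_iff_eq]
    refine Prod.ext (by rw [mul_inv_rev, inv_simple]; group) ?_
    split_ifs <;> push_cast <;> ring

theorem isLiftable_parityPerm : M.IsLiftable cs.parityPerm := by
  intro i j
  have hprod : (cs.parityPerm i * cs.parityPerm j) ^ M i j =
      ((alternatingWord i j (2 * M i j)).map cs.parityPerm).prod := by
    induction M i j with
    | zero => rfl
    | succ p ih => rw [alternatingWord_two_mul_succ, pow_succ', ih]; simp [mul_assoc]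
  have hword : cs.wordProd (alternatingWord i j (2 * M i j)) = 1 := by
    rw [prod_alternatingWord_eq_mul_pow]
    simp [simple_mul_simple_pow]
  ext ⟨t, ε⟩ : 1
  rw [hprod, prod_map_parityPerm_apply, hword,
    ZMod.natCast_eq_zero_iff_even.mpr (cs.even_count_rightInvSeq_alternatingWord i j t)]
  simp

noncomputable def parityRep : W →* Equiv.Perm (W × ZMod 2) :=
  cs.lift ⟨cs.parityPerm, cs.isLiftable_parityPerm⟩

theorem parityRep_wordProd (ω : List B) :
    cs.parityRep (cs.wordProd ω) = (ω.map cs.parityPerm).prod := by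
  rw [wordProd, map_list_prod, List.map_map]
  congr 2
  funext i
  exact cs.lift_apply_simple cs.isLiftable_parityPerm i

theorem natCast_count_rightInvSeq_eq_of_wordProd_eq {ω ω' : List B}
    (h : cs.wordProd ω = cs.wordProd ω') (t : W) :
    ((cs.rightInvSeq ω).count t : ZMod 2) = (cs.rightInvSeq ω').count t := by
  have := congrArg (fun w => (cs.parityRep w (t, 0)).2) h
  simpa [parityRep_wordProd, prod_map_parityPerm_apply] using this

theorem simple_mem_rightInvSeq_of_isRightDescent {ω : List B} {i : B}
    (hi : cs.IsRightDescent (cs.wordProd ω) i) : cs.simple i ∈ cs.rightInvSeq ω := by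
  obtain ⟨τ, hτ, hτω⟩ := cs.exists_isReduced (cs.wordProd ω * cs.simple i)
  have hprod : cs.wordProd (τ ++ [i]) = cs.wordProd ω := by
    rw [wordProd_append, wordProd_singleton, ← hτω, simple_mul_simple_cancel_right]
  have hred : cs.IsReduced (τ ++ [i]) := by
    have := (cs.isRightDescent_iff).mp hi
    rw [IsReduced, hprod, List.length_append, List.length_singleton, ← hτ.eq, ← hτω]
    omega
  have hmem : cs.simple i ∈ cs.rightInvSeq (τ ++ [i]) := by
    rw [← List.concat_eq_append, rightInvSeq_concat, List.concat_eq_append]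
    exact List.mem_append_right _ (List.mem_singleton_self _)
  have hcount := cs.natCast_count_rightInvSeq_eq_of_wordProd_eq hprod (cs.simple i)
  rw [List.count_eq_one_of_mem hred.nodup_rightInvSeq hmem] at hcount
  by_contra hnot
  rw [List.count_eq_zero_of_not_mem hnot] at hcount
  exact one_ne_zero hcount

theorem exists_wordProd_eraseIdx_eq_mul_simple {ω : List B} {i : B}
    (hi : cs.IsRightDescent (cs.wordProd ω) i) :
    ∃ j < ω.length, cs.wordProd (ω.eraseIdx j) = cs.wordProd ω * cs.simple i := by
  obtain ⟨j, hj, hget⟩ := List.getElem_of_mem (cs.simple_mem_rightInvSeq_of_isRightDescent hi)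
  refine ⟨j, by simpa using hj, ?_⟩
  rw [← wordProd_mul_getD_rightInvSeq, List.getD_eq_getElem _ _ hj, hget]

theorem exists_sublist_isReduced_append_cons {v v₀ w : List B} {i : B}
    (h : cs.IsReduced (v ++ w)) (h₀ : cs.IsReduced (v₀ ++ i :: w))
    (heq : cs.wordProd (v₀ ++ i :: w) = cs.wordProd (v ++ w)) :
    ∃ v', v'.Sublist v ∧ cs.IsReduced (v' ++ i :: w) ∧
      cs.wordProd (v' ++ i :: w) = cs.wordProd (v ++ w) := by
  have hv : cs.IsReduced v := by simpa using h.take v.length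
  have hv₀ : cs.wordProd v₀ = cs.wordProd v * cs.simple i := by
    rw [wordProd_append, wordProd_cons, wordProd_append, ← mul_assoc, mul_left_inj] at heq
    rw [← heq, simple_mul_simple_cancel_right]
  have hdesc : cs.IsRightDescent (cs.wordProd v) i := by
    have hlen : (v₀ ++ i :: w).length = (v ++ w).length :=
      h₀.eq.symm.trans ((congrArg cs.length heq).trans h.eq)
    have := cs.length_wordProd_le v₀
    rw [IsRightDescent, ← hv₀, hv.eq]
    simp only [List.length_append, List.length_cons] at hlen
    omega
  obtain ⟨j, hj, hvj⟩ := cs.exists_wordProd_eraseIdx_eq_mul_simple hdesc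
  have hprod : cs.wordProd (v.eraseIdx j ++ i :: w) = cs.wordProd (v ++ w) := by
    rw [wordProd_append, wordProd_cons, hvj, ← mul_assoc, simple_mul_simple_cancel_right,
      wordProd_append]
  refine ⟨v.eraseIdx j, List.eraseIdx_sublist v j, ?_, hprod⟩
  rw [IsReduced, hprod, h.eq]
  simp only [List.length_append, List.length_cons, List.length_eraseIdx_of_lt hj]
  omega

end CoxeterSystem

theorem exists_sublist_isReduced_append_rightmostWord (cs : CoxeterSystem M W) (π : W)
    (Q L : List B) (h : ∃ u : List B, cs.IsReduced u ∧ cs.wordProd u = π ∧ u.Sublist (L ++ Q)) :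
    ∃ v, v.Sublist L ∧ cs.IsReduced (v ++ rightmostWord cs π Q) ∧
      cs.wordProd (v ++ rightmostWord cs π Q) = π := by
  induction Q generalizing L with
  | nil =>
    obtain ⟨u, hu, hπ, hL⟩ := h
    rw [rightmostWord]
    simp only [List.append_nil] at hL ⊢
    exact ⟨u, hL, hu, hπ⟩
  | cons σ rest ih =>
    obtain ⟨v, hvL, hred, hprod⟩ := ih (L ++ [σ]) (by simpa using h)
    obtain ⟨v₁, v₂, rfl, hv₁, hv₂⟩ := List.sublist_append_iff.mp hvL
    rw [rightmostWord]
    rcases List.sublist_singleton.mp hv₂ with rfl | rfl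
    · rw [List.append_nil] at hred hprod
      split_ifs with hσ
      · obtain ⟨_, hu₀, hu₀π, v₀, rfl⟩ := hσ
        obtain ⟨v', hv', hred', hprod'⟩ :=
          cs.exists_sublist_isReduced_append_cons hred hu₀ (hu₀π.trans hprod.symm)
        exact ⟨v', hv'.trans hv₁, hred', hprod'.trans hprod⟩
      · exact ⟨v₁, hv₁, hred, hprod⟩
    · rw [List.append_assoc, List.singleton_append] at hred hprod
      rw [if_pos ⟨_, hred, hprod, v₁, rfl⟩]
      exact ⟨v₁, hv₁, hred, hprod⟩

theorem rightmostWord_isReducedWord (cs : CoxeterSystem M W) (π : W) (Q : List B)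
    (hQ : ∃ u : List B, cs.IsReduced u ∧ cs.wordProd u = π ∧ u.Sublist Q) :
    cs.IsReduced (rightmostWord cs π Q) ∧ cs.wordProd (rightmostWord cs π Q) = π := by
  obtain ⟨v, hv, h⟩ := exists_sublist_isReduced_append_rightmostWord cs π Q [] (by simpa using hQ)
  rw [List.sublist_nil.mp hv, List.nil_append] at h
  exact h
end
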